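/- For every real exponent q ≥ 3 and every a ≥ 0, one has (1+a)^q ≥ 1 + a^q + q·a + q·a^{q-1}. -/

import Mathlib

/-!
Differentiating `(1 + t)^q - (1 + t^q + q t + q t^(q-1))` in `t` gives `q` times the analogous
gap for the exponent `q - 1` with the linear term dropped, and differentiating that once more
gives the gap in `t^r + r t^(r-1) ≤ (1 + t)^r`, which is Bernoulli's inequality for `1 + 1/t`
after factoring out `t^r`. All gaps vanish at `t = 0`, so two integrations finish the proof.
-/

open Real

theorem le_of_hasDerivAt_le_of_nonneg {f g f' g' : ℝ → ℝ}
    (hf : ∀ x, HasDerivAt f (f' x) x) (hg : ∀ x, HasDerivAt g (g' x) x)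
    (h₀ : f 0 ≤ g 0) (hderiv : ∀ x, 0 ≤ x → f' x ≤ g' x) {t : ℝ} (ht : 0 ≤ t) :
    f t ≤ g t :=
  image_le_of_deriv_right_le_deriv_boundary
    (fun x _ => (hf x).continuousAt.continuousWithinAt)
    (fun x _ => (hf x).hasDerivWithinAt) h₀
    (fun x _ => (hg x).continuousAt.continuousWithinAt)
    (fun x _ => (hg x).hasDerivWithinAt) (fun x hx => hderiv x hx.1) ⟨ht, le_rfl⟩

theorem hasDerivAt_one_add_rpow {p : ℝ} (hp : 1 ≤ p) (x : ℝ) :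
    HasDerivAt (fun t => (1 + t) ^ p) (p * (1 + x) ^ (p - 1)) x := by
  simpa using ((hasDerivAt_id x).const_add 1).rpow_const (Or.inr hp)

theorem rpow_add_mul_rpow_sub_one_le_one_add_rpow {r t : ℝ} (hr : 1 ≤ r) (ht : 0 ≤ t) :
    t ^ r + r * t ^ (r - 1) ≤ (1 + t) ^ r := by
  rcases ht.eq_or_lt with rfl | ht
  · rw [zero_rpow (by linarith)]
    rcases hr.eq_or_lt with rfl | hr
    · simp
    · simp [zero_rpow (by linarith : r - 1 ≠ 0)]
  · have bernoulli : 1 + r * t⁻¹ ≤ (1 + t⁻¹) ^ r :=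
      one_add_mul_self_le_rpow_one_add (by linarith [inv_pos.2 ht]) hr
    calc t ^ r + r * t ^ (r - 1) = t ^ r * (1 + r * t⁻¹) := by
          rw [rpow_sub_one ht.ne']; field_simp
      _ ≤ t ^ r * (1 + t⁻¹) ^ r := by gcongr
      _ = (1 + t) ^ r := by
          rw [← mul_rpow ht.le (by positivity), mul_add, mul_inv_cancel₀ ht.ne', mul_one, add_comm]

theorem one_add_rpow_add_mul_rpow_sub_one_le_one_add_rpow {p t : ℝ} (hp : 2 ≤ p) (ht : 0 ≤ t) :
    1 + t ^ p + p * t ^ (p - 1) ≤ (1 + t) ^ p := by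
  refine le_of_hasDerivAt_le_of_nonneg (f := fun t => 1 + t ^ p + p * t ^ (p - 1))
    (f' := fun x => p * x ^ (p - 1) + p * ((p - 1) * x ^ (p - 1 - 1)))
    (fun x => ((hasDerivAt_rpow_const (Or.inr (by linarith))).const_add 1).add
      ((hasDerivAt_rpow_const (Or.inr (by linarith))).const_mul p))
    (hasDerivAt_one_add_rpow (by linarith)) ?_ (fun x hx => ?_) ht
  · simp [zero_rpow (by linarith : p ≠ 0), zero_rpow (by linarith : p - 1 ≠ 0)]
  · have lower := rpow_add_mul_rpow_sub_one_le_one_add_rpow (by linarith : 1 ≤ p - 1) hx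
    rw [← mul_add]
    gcongr

/-- For every real exponent `q ≥ 3` and every `a ≥ 0`,
`(1+a)^q ≥ 1 + a^q + q·a + q·a^(q-1)` (real powers). -/
theorem stmt1 (q a : ℝ) (hq : 3 ≤ q) (ha : 0 ≤ a) :
    (1 + a) ^ q ≥ 1 + a ^ q + q * a + q * a ^ (q - 1) := by
  refine le_of_hasDerivAt_le_of_nonneg (f := fun t => 1 + t ^ q + q * t + q * t ^ (q - 1))
    (f' := fun x => q * x ^ (q - 1) + q + q * ((q - 1) * x ^ (q - 1 - 1)))
    (fun x => (((hasDerivAt_rpow_const (Or.inr (by linarith))).const_add 1).add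
      ((hasDerivAt_id x).const_mul q |>.congr_deriv (mul_one q))).add
      ((hasDerivAt_rpow_const (Or.inr (by linarith))).const_mul q))
    (hasDerivAt_one_add_rpow (by linarith)) ?_ (fun x hx => ?_) ha
  · simp [zero_rpow (by linarith : q ≠ 0), zero_rpow (by linarith : q - 1 ≠ 0)]
  · have lower := one_add_rpow_add_mul_rpow_sub_one_le_one_add_rpow (by linarith : 2 ≤ q - 1) hx
    linarith [mul_le_mul_of_nonneg_left lower (by linarith : (0:ℝ) ≤ q)]
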